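/- arXiv:math/0606150 — 2 statements merged into one kernel-verified Lean document; each statement's English description precedes it below -/
import Mathlib

section
/- The two-sided ideal of ℂ⟨⟨x,y⟩⟩ (noncommutative power series in two variables) consisting of all series each of whose monomials with nonzero coefficient contains at least one factor x is NOT finitely generated as a two-sided ideal in the algebraic sense; in particular, the element Σ_{k≥1} y^k x y^k cannot be written as a finite sum Σ_{i=1}^N f_i(y) · x · g_i(y) with f_i, g_i ∈ ℂ⟨⟨y⟩⟩. -/
/-- Convolution product on noncommutative power series in two variables
`x = 0`, `y = 1`. -/
noncomputable def ncMul (f g : List (Fin 2) → ℂ) : List (Fin 2) → ℂ :=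
  fun K => ∑ i ∈ Finset.range (K.length + 1), f (K.take i) * g (K.drop i)

/-- The variable `x` as a power series. -/
def xSer : List (Fin 2) → ℂ := fun K => if K = [(0 : Fin 2)] then 1 else 0

open Classical in
/-- The series `Σ_{k ≥ 1} y^k x y^k`. -/
noncomputable def hSer : List (Fin 2) → ℂ :=
  fun K => if h : ∃ k : ℕ, 1 ≤ k ∧
      K = List.replicate k (1 : Fin 2) ++ [(0 : Fin 2)] ++
          List.replicate k (1 : Fin 2)
    then 1 else 0

/-- A power series lies in `ℂ⟨⟨y⟩⟩`, i.e. is supported on words in the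
letter `y = 1` only. -/
def onlyY (f : List (Fin 2) → ℂ) : Prop :=
  ∀ K : List (Fin 2), f K ≠ 0 → ∀ a ∈ K, a = (1 : Fin 2)

/-!
Write `y^j x y^k` for the word `yxy j k`. If `f` is supported on powers of `y`, the
coefficient of `y^j x y^k` in `f · x · g` is `f(y^j) g(y^k)`: of all ways to split the word,
only the split just before `x` contributes. Hence a representation
`Σ_{k ≥ 1} y^k x y^k = Σ_{i < N} f_i · x · g_i` would give `Σ_i f_i(y^j) g_i(y^k) = δ_{jk}`
for `1 ≤ j, k ≤ N + 1`, i.e. a factorisation of the identity matrix of size `N + 1`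
through `ℂ^N`, which is impossible by rank.
-/

theorem Matrix.mul_ne_one_of_card_lt {m n R : Type*} [Fintype m] [Fintype n] [DecidableEq m]
    [CommRing R] [Nontrivial R] (A : Matrix m n R) (B : Matrix n m R)
    (h : Fintype.card n < Fintype.card m) : A * B ≠ 1 := by
  intro hAB
  have := (A.rank_mul_le_left B).trans A.rank_le_card_width
  rw [hAB, Matrix.rank_one] at this
  omega

def yxy (j k : ℕ) : List (Fin 2) :=
  List.replicate j 1 ++ 0 :: List.replicate k 1

lemma yxy_succ (j k : ℕ) : yxy (j + 1) k = 1 :: yxy j k := rfl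

lemma idxOf_yxy (j k : ℕ) : (yxy j k).idxOf 0 = j := by
  induction j with
  | zero => simp [yxy]
  | succ j ih => rw [yxy_succ, List.idxOf_cons_ne _ (by decide), ih]

lemma length_yxy (j k : ℕ) : (yxy j k).length = j + k + 1 := by
  simp only [yxy, List.length_append, List.length_replicate, List.length_cons]
  omega

lemma yxy_inj {j k j' k' : ℕ} (h : yxy j k = yxy j' k') : j = j' ∧ k = k' := by
  have hj : j = j' := by rw [← idxOf_yxy j k, ← idxOf_yxy j' k', h]
  have hl := congrArg List.length h
  rw [length_yxy, length_yxy] at hl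
  omega

lemma hSer_yxy (j k : ℕ) : hSer (yxy j k) = if 1 ≤ j ∧ j = k then 1 else 0 := by
  have hiff : (∃ m, 1 ≤ m ∧ yxy j k = List.replicate m 1 ++ [0] ++ List.replicate m 1) ↔
      1 ≤ j ∧ j = k := by
    simp only [List.append_assoc, List.singleton_append]
    constructor
    · rintro ⟨m, hm, h⟩
      obtain ⟨rfl, rfl⟩ := yxy_inj h
      exact ⟨hm, rfl⟩
    · rintro ⟨hj, rfl⟩
      exact ⟨j, hj, rfl⟩
  rw [hSer]
  split_ifs with h₁ h₂ h₂
  exacts [rfl, absurd (hiff.mp h₁) h₂, absurd (hiff.mpr h₂) h₁, rfl]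

lemma ncMul_xSer_cons (g : List (Fin 2) → ℂ) (a : Fin 2) (L : List (Fin 2)) :
    ncMul xSer g (a :: L) = if a = 0 then g L else 0 := by
  rw [ncMul, Finset.sum_eq_single 1]
  · simp [xSer]
  · intro t _ ht
    rcases t with _ | _ | t
    · simp [xSer]
    · exact absurd rfl ht
    · simp only [Finset.mem_range, List.length_cons] at *
      simp [xSer, List.ne_nil_of_length_pos (by omega : 0 < L.length)]
  · simp

lemma ncMul_xSer_yxy (g : List (Fin 2) → ℂ) (i k : ℕ) :
    ncMul xSer g (yxy i k) = if i = 0 then g (List.replicate k 1) else 0 := by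
  cases i with
  | zero => simp [yxy, ncMul_xSer_cons]
  | succ i => simp [yxy_succ, ncMul_xSer_cons]

lemma drop_yxy {s j : ℕ} (k : ℕ) (h : s ≤ j) : (yxy j k).drop s = yxy (j - s) k := by
  simp [yxy, List.drop_append_of_le_length, h, List.drop_replicate]

lemma take_yxy_self (j k : ℕ) : (yxy j k).take j = List.replicate j 1 := by
  simp [yxy]

lemma zero_mem_take_yxy {s j : ℕ} (k : ℕ) (h : j < s) : 0 ∈ (yxy j k).take s := by
  obtain ⟨t, rfl⟩ := Nat.exists_eq_add_of_lt h
  rw [Nat.add_assoc]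
  simp [yxy, List.take_append]

lemma onlyY.apply_eq_zero {f : List (Fin 2) → ℂ} (hf : onlyY f) {K : List (Fin 2)}
    (hK : 0 ∈ K) : f K = 0 := by
  by_contra hne
  exact absurd (hf K hne 0 hK) (by decide)

lemma ncMul_ncMul_xSer_yxy {f : List (Fin 2) → ℂ} (hf : onlyY f) (g : List (Fin 2) → ℂ)
    (j k : ℕ) :
    ncMul f (ncMul xSer g) (yxy j k) = f (List.replicate j 1) * g (List.replicate k 1) := by
  rw [ncMul, Finset.sum_eq_single j]
  -- Splitting before position `j` leaves `x · g` facing a word that starts with `y`;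
  -- splitting after it leaves `f` facing a word that contains `x`.
  · rw [take_yxy_self, drop_yxy k le_rfl, Nat.sub_self, ncMul_xSer_yxy, if_pos rfl]
  · intro s _ hs
    rcases Nat.lt_or_gt_of_ne hs with hlt | hgt
    · rw [drop_yxy k hlt.le, ncMul_xSer_yxy, if_neg (by omega), mul_zero]
    · rw [hf.apply_eq_zero (zero_mem_take_yxy k hgt), zero_mul]
  · simp only [Finset.mem_range, length_yxy]
    omega

/-- `Σ_{k ≥ 1} y^k x y^k` cannot be written as a finite sum
`Σ_{i=1}^N f_i(y) · x · g_i(y)` with `f_i, g_i ∈ ℂ⟨⟨y⟩⟩`; in particular the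
two-sided ideal `(x)` of `ℂ⟨⟨x,y⟩⟩` is not algebraically finitely generated. -/
theorem hSer_not_finite_combination :
    ¬ ∃ (N : ℕ) (f g : Fin N → (List (Fin 2) → ℂ)),
        (∀ i, onlyY (f i)) ∧ (∀ i, onlyY (g i)) ∧
        (∀ K : List (Fin 2),
          hSer K = ∑ i : Fin N, ncMul (f i) (ncMul xSer (g i)) K) := by
  rintro ⟨N, f, g, hf, -, hfg⟩
  refine Matrix.mul_ne_one_of_card_lt
    (Matrix.of fun (j : Fin (N + 1)) i => f i (List.replicate (j + 1) 1))
    (Matrix.of fun i (k : Fin (N + 1)) => g i (List.replicate (k + 1) 1)) (by simp) ?_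
  ext j k
  have hjk := hfg (yxy (j + 1) (k + 1))
  simp only [hSer_yxy, ncMul_ncMul_xSer_yxy (hf _)] at hjk
  simp [Matrix.mul_apply, Matrix.one_apply, ← hjk, Fin.val_inj]
end

section
/- Let f = Σ_I a_I (x−p)^I be a noncommutative power series whose abelized absolute-value series Σ_I |a_I| (x−p)^I converges on the open polydisk P(p,r). Then for every word J and every point q ∈ P(p,r), the series a_J(q) := Σ_{I ≥ J} (I choose J) a_I (q−p)^{I−J} converges absolutely. -/
/-!
The coefficient `(I choose J)` is at most `|I|^|J|`, and when `J` embeds in `I`,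
`|(q-p)^{I-J}| ≤ t^I / t^J` for any positive radii `t ≥ |q - p|`. Pick `θ < 1` with
`|q - p| < θ²r`, and put `u = θr`, `t = θu`. Then `t^I = θ^|I| u^I` and `|I|^|J| θ^|I|` is
bounded, so the series is dominated by a multiple of `Σ |a_I| u^I`, the abelized absolute
series at the point `p + u` of the polydisk.
-/

/-- `(I choose J)`: the number of order-preserving injective letter-respecting
maps from `J` to `I`. -/
noncomputable def chooseCount {n : ℕ} (I J : List (Fin n)) : ℕ :=
  Set.ncard {α : Fin J.length → Fin I.length |
    StrictMono α ∧ ∀ k, J.get k = I.get (α k)}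

/-- `w^I`: product of the values of `w` over the letters of the word `I`. -/
def wprod {n : ℕ} (w : Fin n → ℂ) (I : List (Fin n)) : ℂ := (I.map w).prod

/-- `w^M` for a multiset of letters `M`. -/
def mprod {n : ℕ} (w : Fin n → ℂ) (M : Multiset (Fin n)) : ℂ := (M.map w).prod

/-- `(q−p)^{I−J}`: the product over the letters of `I` remaining after
deleting an embedded copy of `J` (as multisets; independent of the embedding). -/
noncomputable def diffProd {n : ℕ} (p q : Fin n → ℂ) (I J : List (Fin n)) : ℂ :=
  mprod (fun i => q i - p i) ((I : Multiset (Fin n)) - (J : Multiset (Fin n)))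

open Filter Topology

theorem List.prod_map_pos {ι R : Type*} [CommMonoidWithZero R] [PartialOrder R]
    [ZeroLEOneClass R] [PosMulStrictMono R] [NeZero (1 : R)] {f : ι → R}
    (hf : ∀ i, 0 < f i) (l : List ι) : 0 < (l.map f).prod :=
  List.prod_pos fun x hx => by
    obtain ⟨i, -, rfl⟩ := List.mem_map.1 hx
    exact hf i

theorem exists_forall_pow_mul_geometric_le (k : ℕ) {θ : ℝ} (h0 : 0 ≤ θ) (h1 : θ < 1) :
    ∃ K, ∀ m : ℕ, (m : ℝ) ^ k * θ ^ m ≤ K := by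
  obtain ⟨K, hK⟩ := (tendsto_pow_const_mul_const_pow_of_abs_lt_one k
    ((abs_of_nonneg h0).trans_lt h1)).bddAbove_range
  exact ⟨K, fun m => hK (Set.mem_range_self m)⟩

theorem exists_lt_mul_mul_of_forall_lt {ι : Type*} [Finite ι] {x r : ι → ℝ}
    (h : ∀ i, x i < r i) : ∃ θ, 0 < θ ∧ θ < 1 ∧ ∀ i, x i < θ * (θ * r i) := by
  have hlim : ∀ i, Tendsto (fun θ : ℝ => θ * (θ * r i)) (𝓝[<] 1) (𝓝 (r i)) := fun i => by
    have : Continuous fun θ : ℝ => θ * (θ * r i) := by fun_prop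
    simpa using this.continuousWithinAt (s := Set.Iio 1) (x := 1) |>.tendsto
  have hpos : ∀ᶠ θ in 𝓝[<] (1 : ℝ), 0 < θ :=
    nhdsWithin_le_nhds (eventually_gt_nhds one_pos)
  obtain ⟨θ, hθ0, hθ1, hθ⟩ := (hpos.and (eventually_mem_nhdsWithin.and
    (eventually_all.2 fun i => (hlim i).eventually (eventually_gt_nhds (h i))))).exists
  exact ⟨θ, hθ0, hθ1, hθ⟩

section Words

variable {n : ℕ}

theorem chooseCount_le_pow_length (I J : List (Fin n)) :
    chooseCount I J ≤ I.length ^ J.length :=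
  calc chooseCount I J ≤ (Set.univ : Set (Fin J.length → Fin I.length)).ncard :=
        Set.ncard_le_ncard (Set.subset_univ _)
    _ = I.length ^ J.length := by simp [Set.ncard_univ]

theorem sublist_of_chooseCount_ne_zero {I J : List (Fin n)} (h : chooseCount I J ≠ 0) :
    J.Sublist I := by
  obtain ⟨α, hmono, hget⟩ := Set.nonempty_of_ncard_ne_zero h
  exact List.sublist_iff_exists_fin_orderEmbedding_get_eq.2
    ⟨OrderEmbedding.ofStrictMono α hmono, hget⟩

theorem norm_wprod (w : Fin n → ℂ) (I : List (Fin n)) :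
    ‖wprod w I‖ = (I.map fun i => ‖w i‖).prod := by
  rw [wprod, List.norm_prod, List.map_map]
  rfl

theorem norm_mprod_le {w : Fin n → ℂ} {c : Fin n → ℝ} (hw : ∀ i, ‖w i‖ ≤ c i)
    (M : Multiset (Fin n)) : ‖mprod w M‖ ≤ (M.map c).prod := by
  have hnorm : ‖mprod w M‖ = (M.map fun i => ‖w i‖).prod := by
    simpa [mprod, Multiset.map_map] using map_multiset_prod (normHom (α := ℂ)) (M.map w)
  rw [hnorm]
  exact Multiset.prod_map_le_prod_map₀ _ _ (fun i _ => norm_nonneg (w i)) fun i _ => hw i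

theorem norm_diffProd_le_div {p q : Fin n → ℂ} {t : Fin n → ℝ}
    (ht : ∀ i, ‖q i - p i‖ ≤ t i) (ht0 : ∀ i, 0 < t i) {I J : List (Fin n)}
    (hJI : J.Sublist I) :
    ‖diffProd p q I J‖ ≤ (I.map t).prod / (J.map t).prod := by
  have hJ : 0 < (J.map t).prod := List.prod_map_pos ht0 J
  have hsplit :
      (((I : Multiset (Fin n)) - J).map t).prod * (J.map t).prod = (I.map t).prod := by
    simpa using congrArg (fun M => (M.map t).prod)
      (tsub_add_cancel_of_le (Multiset.coe_le.2 hJI.subperm))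
  rw [le_div_iff₀ hJ, ← hsplit]
  exact mul_le_mul_of_nonneg_right (norm_mprod_le ht _) hJ.le

theorem chooseCount_mul_norm_diffProd_le {p q : Fin n → ℂ} {t : Fin n → ℝ}
    (ht : ∀ i, ‖q i - p i‖ ≤ t i) (ht0 : ∀ i, 0 < t i) (I J : List (Fin n)) :
    (chooseCount I J : ℝ) * ‖diffProd p q I J‖ ≤
      (I.length : ℝ) ^ J.length * ((I.map t).prod / (J.map t).prod) := by
  have hnonneg : ∀ L : List (Fin n), 0 ≤ (L.map t).prod := fun L =>
    (List.prod_map_pos ht0 L).le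
  by_cases hc : chooseCount I J = 0
  · rw [hc, Nat.cast_zero, zero_mul]
    exact mul_nonneg (by positivity) (div_nonneg (hnonneg I) (hnonneg J))
  · exact mul_le_mul (by exact_mod_cast chooseCount_le_pow_length I J)
      (norm_diffProd_le_div ht ht0 (sublist_of_chooseCount_ne_zero hc))
      (norm_nonneg _) (by positivity)

theorem chooseCount_mul_norm_diffProd_le_mul_prod {p q : Fin n → ℂ} {θ K : ℝ}
    {u : Fin n → ℝ} {J : List (Fin n)} (hθ : 0 < θ) (hu : ∀ i, 0 < u i)
    (hq : ∀ i, ‖q i - p i‖ ≤ θ * u i) (hK : ∀ m : ℕ, (m : ℝ) ^ J.length * θ ^ m ≤ K)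
    (I : List (Fin n)) :
    (chooseCount I J : ℝ) * ‖diffProd p q I J‖ ≤
      K / (J.map fun i => θ * u i).prod * (I.map u).prod := by
  have ht : ∀ i, 0 < θ * u i := fun i => mul_pos hθ (hu i)
  have hI := List.prod_map_pos hu I
  have hJ := List.prod_map_pos ht J
  have htI : (I.map fun i => θ * u i).prod = θ ^ I.length * (I.map u).prod := by
    simp [List.prod_map_mul, List.map_const', List.prod_replicate]
  calc (chooseCount I J : ℝ) * ‖diffProd p q I J‖
      ≤ (I.length : ℝ) ^ J.length *
          ((I.map fun i => θ * u i).prod / (J.map fun i => θ * u i).prod) :=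
        chooseCount_mul_norm_diffProd_le hq ht I J
    _ = (I.length : ℝ) ^ J.length * θ ^ I.length *
          ((I.map u).prod / (J.map fun i => θ * u i).prod) := by
        rw [htI]; ring
    _ ≤ K * ((I.map u).prod / (J.map fun i => θ * u i).prod) := by
        gcongr
        exact hK _
    _ = K / (J.map fun i => θ * u i).prod * (I.map u).prod := by ring

end Words

theorem reexpansion_coefficients_converge_general {n : ℕ}
    (a : List (Fin n) → ℂ) (p : Fin n → ℂ) (r : Fin n → ℝ)
    (hconv : ∀ z : Fin n → ℂ, (∀ i, ‖z i - p i‖ < r i) →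
      Summable (fun I : List (Fin n) =>
        ‖a I‖ * ‖wprod (fun i => z i - p i) I‖))
    (q : Fin n → ℂ) (hq : ∀ i, ‖q i - p i‖ < r i)
    (J : List (Fin n)) :
    Summable (fun I : List (Fin n) =>
      (chooseCount I J : ℝ) * ‖a I‖ *
        ‖diffProd p q I J‖) := by
  obtain ⟨θ, hθ0, hθ1, hθ⟩ := exists_lt_mul_mul_of_forall_lt hq
  have hr : ∀ i, 0 < r i := fun i => (norm_nonneg _).trans_lt (hq i)
  set u : Fin n → ℝ := fun i => θ * r i
  have hu : ∀ i, 0 < u i := fun i => mul_pos hθ0 (hr i)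
  have hsum : Summable fun I : List (Fin n) => ‖a I‖ * (I.map u).prod := by
    have hz : ∀ i, ‖(p i + u i) - p i‖ < r i := fun i => by
      simpa [abs_of_pos (hu i)] using mul_lt_of_lt_one_left (hr i) hθ1
    simpa [norm_wprod, abs_of_pos (hu _)] using hconv (fun i => p i + u i) hz
  obtain ⟨K, hK⟩ := exists_forall_pow_mul_geometric_le J.length hθ0.le hθ1
  refine Summable.of_nonneg_of_le (fun I => by positivity) (fun I => ?_)
    (hsum.mul_left (K / (J.map fun i => θ * u i).prod))
  calc (chooseCount I J : ℝ) * ‖a I‖ * ‖diffProd p q I J‖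
      = ‖a I‖ * ((chooseCount I J : ℝ) * ‖diffProd p q I J‖) := by ring
    _ ≤ ‖a I‖ * (K / (J.map fun i => θ * u i).prod * (I.map u).prod) :=
        mul_le_mul_of_nonneg_left
          (chooseCount_mul_norm_diffProd_le_mul_prod hθ0 hu (fun i => (hθ i).le) hK I)
          (norm_nonneg _)
    _ = K / (J.map fun i => θ * u i).prod * (‖a I‖ * (I.map u).prod) := by ring

/-- if `Σ_I |a_I| (x−p)^I` converges on the polydisk `P(p,r)`,
then for every word `J` and every `q ∈ P(p,r)` the series
`a_J(q) = Σ_{I ≥ J} (I choose J) a_I (q−p)^{I−J}` converges absolutely. -/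
theorem reexpansion_coefficients_converge {n : ℕ}
    (a : List (Fin n) → ℂ) (p : Fin n → ℂ) (r : Fin n → ℝ)
    (hr : ∀ i, 0 < r i)
    (hconv : ∀ z : Fin n → ℂ, (∀ i, ‖z i - p i‖ < r i) →
      Summable (fun I : List (Fin n) =>
        ‖a I‖ * ‖wprod (fun i => z i - p i) I‖))
    (q : Fin n → ℂ) (hq : ∀ i, ‖q i - p i‖ < r i)
    (J : List (Fin n)) :
    Summable (fun I : List (Fin n) =>
      (chooseCount I J : ℝ) * ‖a I‖ *
        ‖diffProd p q I J‖) :=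
  reexpansion_coefficients_converge_general a p r hconv q hq J
end
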